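/- arXiv:0711.2974 — 2 statements merged into one kernel-verified Lean document; each statement's English description precedes it below -/
import Mathlib

section
/- Let k be an algebraically closed field of characteristic 0. Let f ∈ k[x][y] be a polynomial of degree m ≥ 1 in the variable y, with coefficients a_0(x), …, a_m(x) ∈ k[x], and assume the leading coefficient satisfies a_m(0) ≠ 0 (equivalently, the one-variable polynomial f(0,y) has degree exactly m). Then there exist a positive integer N and power series y_1, …, y_m ∈ k[[u]] such that, in the polynomial ring (k[[u]])[y], one has the factorization f(u^N, y) = a_m(u^N) · ∏_{i=1}^m (y − y_i(u)). (This is the statement that the m Newton–Puiseux expansions of the roots of f along x = 0 all lie in the ring of fractional power series k[[x^{1/N}]] for some integer N.) -/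
/-!
The roots are produced one at a time, after substituting `u ↦ u ^ N` for suitable `N`.
For a monic `f ∈ k⟦u⟧[y]` of degree `m`, a Tschirnhaus shift first kills the coefficient of
`y ^ (m - 1)`. Rescaling `y` by `u ^ (p / q)`, with `p / q` the smallest slope of the Newton
polygon, then gives a monic polynomial whose reduction mod `u` is not a monomial; having no
`y ^ (m - 1)` term, it is not a perfect `m`-th power `(y - c) ^ m` either. Translating by a root `c`
of the reduction, the Weierstrass preparation theorem splits off a monic factor of degree strictly
between `0` and `m`, to which induction applies.
-/

open PowerSeries

instance PowerSeries.isAdicComplete_maximalIdeal {k : Type*} [Field k] :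
    IsAdicComplete (IsLocalRing.maximalIdeal k⟦X⟧) k⟦X⟧ :=
  PowerSeries.maximalIdeal_eq_span_X (k := k) ▸ inferInstance

theorem Finset.exists_min_ratio {ι : Type*} {S : Finset ι} (hS : S.Nonempty) (a b : ι → ℕ)
    (hb : ∀ i ∈ S, 0 < b i) : ∃ i₀ ∈ S, ∀ i ∈ S, a i₀ * b i ≤ b i₀ * a i := by
  obtain ⟨i₀, hi₀, hmin⟩ := S.exists_min_image (fun i => (a i : ℚ) / b i) hS
  refine ⟨i₀, hi₀, fun i hi => ?_⟩
  have := hmin i hi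
  rw [div_le_div_iff₀ (by exact_mod_cast hb i₀ hi₀) (by exact_mod_cast hb i hi)] at this
  exact_mod_cast (by linarith : (a i₀ : ℚ) * b i ≤ b i₀ * a i)

namespace Polynomial

section CommRing

variable {R : Type*} [CommRing R]

theorem Monic.eq_X_pow_of_coeff_eq_zero {p : R[X]} (hp : p.Monic)
    (h : ∀ i < p.natDegree, p.coeff i = 0) : p = X ^ p.natDegree := by
  ext i
  rw [coeff_X_pow]
  rcases lt_trichotomy i p.natDegree with hi | rfl | hi
  · rw [h i hi, if_neg hi.ne]
  · rw [if_pos rfl, hp.coeff_natDegree]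
  · rw [if_neg hi.ne', coeff_eq_zero_of_natDegree_lt hi]

theorem Monic.coeff_comp_X_add_C_natDegree_sub_one {p : R[X]} (hp : p.Monic)
    (hpos : 0 < p.natDegree) (c : R) :
    (p.comp (X + C c)).coeff (p.natDegree - 1) =
      p.coeff (p.natDegree - 1) + p.natDegree * c := by
  set n := p.natDegree
  have hn : p.coeff n = 1 := hp.coeff_natDegree
  have hd : (hasseDeriv (n - 1) p).natDegree ≤ 1 :=
    (natDegree_hasseDeriv_le p _).trans (by omega)
  rw [← taylor_apply, taylor_coeff, eq_X_add_C_of_natDegree_le_one hd]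
  simp [hasseDeriv_coeff, show 1 + (n - 1) = n by omega, hn, Nat.choose_symm (k := 1) hpos]
  ring

theorem Monic.exists_coeff_comp_X_add_C_natDegree_sub_one_eq_zero {p : R[X]} (hp : p.Monic)
    (hpos : 0 < p.natDegree) (hu : IsUnit (p.natDegree : R)) :
    ∃ b, (p.comp (X + C b)).coeff (p.natDegree - 1) = 0 :=
  ⟨-(↑hu.unit⁻¹ * p.coeff (p.natDegree - 1)), by
    rw [hp.coeff_comp_X_add_C_natDegree_sub_one hpos, mul_neg, ← mul_assoc, IsUnit.mul_val_inv,
      one_mul, add_neg_cancel]⟩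

theorem Monic.eq_X_pow_of_comp_X_add_C_eq_X_pow [NoZeroDivisors R] [CharZero R] {p : R[X]}
    (hp : p.Monic) (hpos : 0 < p.natDegree) (hsub : p.coeff (p.natDegree - 1) = 0) {c : R}
    (h : p.comp (X + C c) = X ^ p.natDegree) : p = X ^ p.natDegree := by
  have hc := hp.coeff_comp_X_add_C_natDegree_sub_one hpos c
  rw [h, coeff_X_pow, if_neg (by omega), hsub, zero_add, eq_comm, mul_eq_zero] at hc
  obtain rfl : c = 0 := hc.resolve_left (Nat.cast_ne_zero.mpr hpos.ne')
  simpa using h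

theorem Monic.exists_scaleRoots_eq {p : R[X]} (hp : p.Monic) {s : R}
    (hdvd : ∀ i, s ^ (p.natDegree - i) ∣ p.coeff i) :
    ∃ p₁ : R[X], p₁.Monic ∧ p₁.scaleRoots s = p := by
  nontriviality R
  choose b hb using hdvd
  set n := p.natDegree
  have hbn : b n = 1 := by
    have hpn : p.coeff n = 1 := hp.coeff_natDegree
    simpa [hpn] using (hb n).symm
  set p₁ := ∑ i ∈ Finset.range (n + 1), monomial i (b i)
  have hcoeff : ∀ i, p₁.coeff i = if i ≤ n then b i else 0 := fun i => by
    simp [p₁, coeff_monomial]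
  have hle : p₁.natDegree ≤ n :=
    natDegree_le_iff_coeff_eq_zero.mpr fun i hi => by simp [hcoeff, not_le.mpr hi]
  have hn : p₁.coeff n = 1 := by simp [hcoeff, hbn]
  have hdeg : p₁.natDegree = n := le_antisymm hle (le_natDegree_of_ne_zero (by simp [hn]))
  refine ⟨p₁, monic_of_natDegree_le_of_coeff_eq_one n hle hn, ext fun i => ?_⟩
  rw [coeff_scaleRoots, hdeg, hcoeff]
  split_ifs with hi
  · rw [hb, mul_comm]
  · rw [zero_mul, coeff_eq_zero_of_natDegree_lt (not_le.mp hi)]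

theorem map_expand_mul (f : R⟦X⟧[X]) {N q : ℕ} (hN : N ≠ 0) (hq : q ≠ 0) :
    f.map (PowerSeries.expand (N * q) (mul_ne_zero hN hq)).toRingHom =
      (f.map (PowerSeries.expand q hq).toRingHom).map (PowerSeries.expand N hN).toRingHom := by
  rw [map_map]
  congr 1
  exact RingHom.ext fun φ => PowerSeries.expand_mul N hN q hq φ

/-- `f(u, y)` has a root `y = z(u ^ (1 / N))` with `z ∈ R⟦u⟧`. -/
def HasPuiseuxRoot (f : R⟦X⟧[X]) : Prop :=
  ∃ (N : ℕ) (hN : N ≠ 0) (z : R⟦X⟧),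
    (f.map (PowerSeries.expand N hN).toRingHom).eval z = 0

namespace HasPuiseuxRoot

variable {f g : R⟦X⟧[X]}

theorem of_dvd_comp {q : R⟦X⟧[X]} (h : g ∣ f.comp q) (hg : g.HasPuiseuxRoot) :
    f.HasPuiseuxRoot := by
  obtain ⟨N, hN, z, hz⟩ := hg
  obtain ⟨r, hr⟩ := h
  refine ⟨N, hN, (q.map (PowerSeries.expand N hN).toRingHom).eval z, ?_⟩
  have := congr(eval z (map (PowerSeries.expand N hN).toRingHom $hr))
  rwa [Polynomial.map_comp, eval_comp, Polynomial.map_mul, eval_mul, hz, zero_mul] at this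

theorem of_dvd (h : g ∣ f) (hg : g.HasPuiseuxRoot) : f.HasPuiseuxRoot :=
  hg.of_dvd_comp (q := X) (by rwa [comp_X])

theorem of_map_expand {q : ℕ} {hq : q ≠ 0}
    (hf : (f.map (PowerSeries.expand q hq).toRingHom).HasPuiseuxRoot) : f.HasPuiseuxRoot := by
  obtain ⟨N, hN, z, hz⟩ := hf
  exact ⟨N * q, mul_ne_zero hN hq, z, by rwa [map_expand_mul]⟩

theorem scaleRoots (hf : f.HasPuiseuxRoot) (s : R⟦X⟧) : (f.scaleRoots s).HasPuiseuxRoot := by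
  obtain ⟨N, hN, z, hz⟩ := hf
  refine ⟨N, hN, (PowerSeries.expand N hN).toRingHom s * z, ?_⟩
  rw [eval_map] at hz ⊢
  rw [scaleRoots_eval₂_mul, hz, mul_zero]

theorem of_coeff_zero_eq_zero (h : f.coeff 0 = 0) : f.HasPuiseuxRoot :=
  ⟨1, one_ne_zero, 0, by rw [← coeff_zero_eq_eval_zero, coeff_map, h, map_zero]⟩

end HasPuiseuxRoot

end CommRing

section IsLocalRing

open IsLocalRing

variable {A : Type*} [CommRing A] [IsLocalRing A] [IsAdicComplete (maximalIdeal A) A]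

/-- Weierstrass preparation, read for a monic polynomial: the unit factor is a polynomial too. -/
theorem Monic.exists_isDistinguishedAt_mul {h : A[X]} (hh : h.Monic) :
    ∃ f q : A[X], f.IsDistinguishedAt (maximalIdeal A) ∧ IsUnit (q.coeff 0) ∧ h = f * q := by
  have hmap : (h : A⟦X⟧).map (residue A) ≠ 0 := fun h0 => by
    simpa [hh.coeff_natDegree] using congr(PowerSeries.coeff h.natDegree $h0)
  obtain ⟨f, w, hf, hw, hfw⟩ := PowerSeries.exists_isWeierstrassFactorization hmap
  have hdiv : (f : A⟦X⟧) * (w - ↑(h /ₘ f)) = ↑(h %ₘ f) := by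
    have := congr(((↑$(modByMonic_add_div h f)) : A⟦X⟧))
    push_cast at this
    linear_combination -hfw - this
  have hdeg : (h %ₘ f).degree <
      ((f : A⟦X⟧).map (Ideal.Quotient.mk (maximalIdeal A))).order.toNat := by
    rw [← hf.coe_natDegree_eq_order_map (f : A⟦X⟧) 1 (by simp) (mul_one _).symm]
    simpa only [ENat.toNat_natCast, ← degree_eq_natDegree hf.monic.ne_zero] using
      degree_modByMonic_lt h hf.monic
  obtain ⟨hwq, hr⟩ := hf.isWeierstrassDivisorAt'.eq_zero_of_mul_eq hdeg hdiv
  refine ⟨f, h /ₘ f, hf, ?_, ?_⟩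
  · rw [sub_eq_zero] at hwq
    have := hw.map PowerSeries.constantCoeff
    rwa [hwq, ← PowerSeries.coeff_zero_eq_constantCoeff_apply, Polynomial.coeff_coe] at this
  · simpa [hr] using (modByMonic_add_div h f).symm

theorem Monic.exists_monic_dvd_of_isUnit_coeff {h : A[X]} (hh : h.Monic)
    (h0 : ¬IsUnit (h.coeff 0)) {i : ℕ} (hi : i < h.natDegree) (hu : IsUnit (h.coeff i)) :
    ∃ P : A[X], P.Monic ∧ P ∣ h ∧ 0 < P.natDegree ∧ P.natDegree < h.natDegree := by
  obtain ⟨f, q, hf, hq0, rfl⟩ := hh.exists_isDistinguishedAt_mul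
  have hq : q.Monic := hf.monic.of_mul_monic_left hh
  rw [hf.monic.natDegree_mul hq] at hi ⊢
  refine ⟨f, hf.monic, dvd_mul_right f q, Nat.pos_of_ne_zero fun hf0 => h0 ?_, ?_⟩
  · rwa [hf.monic.natDegree_eq_zero.mp hf0, one_mul]
  · refine Nat.lt_add_of_pos_right (Nat.pos_of_ne_zero fun hq0 => ?_)
    rw [hq.natDegree_eq_zero.mp hq0, mul_one] at hu
    rw [hq0, add_zero] at hi
    exact (maximalIdeal.isMaximal A).ne_top (Ideal.eq_top_of_isUnit_mem _ (hf.mem hi) hu)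

end IsLocalRing

section Field

variable {k : Type*} [Field k]

theorem _root_.PowerSeries.X_pow_dvd_expand_of_le {φ : k⟦X⟧} {n q : ℕ} (hq : q ≠ 0)
    (h : n ≤ q * φ.order.toNat) : PowerSeries.X ^ n ∣ PowerSeries.expand q hq φ := by
  refine (pow_dvd_pow _ h).trans ?_
  rw [pow_mul, ← PowerSeries.expand_X (R := k) _ hq, ← map_pow]
  exact _root_.map_dvd _ PowerSeries.X_pow_order_dvd

theorem Monic.exists_scaleRoots_eq_map_expand {g : k⟦X⟧[X]} (hg : g.Monic)
    (hpos : 0 < g.natDegree) (h0 : g.coeff 0 ≠ 0) :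
    ∃ (q : ℕ) (hq : q ≠ 0) (p : ℕ) (g₁ : k⟦X⟧[X]), g₁.Monic ∧
      g₁.scaleRoots (PowerSeries.X ^ p) = g.map (PowerSeries.expand q hq).toRingHom ∧
      ∃ i < g.natDegree, PowerSeries.constantCoeff (g₁.coeff i) ≠ 0 := by
  classical
  set m := g.natDegree
  set o : ℕ → ℕ := fun i => (g.coeff i).order.toNat
  set S := (Finset.range m).filter (fun i => g.coeff i ≠ 0)
  -- `i₀` realises the smallest slope `o i / (m - i)` of the Newton polygon
  obtain ⟨i₀, hi₀S, hslope⟩ := S.exists_min_ratio ⟨0, by simp [S, hpos, h0]⟩ o (m - ·)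
    fun i hi => by simp [S] at hi; omega
  obtain ⟨hi₀m, hi₀⟩ : i₀ < m ∧ g.coeff i₀ ≠ 0 := by simpa [S] using hi₀S
  have hq : m - i₀ ≠ 0 := by omega
  have hdvd : ∀ i, (PowerSeries.X ^ o i₀ : k⟦X⟧) ^
      ((g.map (PowerSeries.expand _ hq).toRingHom).natDegree - i) ∣
        (g.map (PowerSeries.expand _ hq).toRingHom).coeff i := fun i => by
    rw [hg.natDegree_map, coeff_map, ← pow_mul]
    by_cases hi : i < m
    · by_cases hgi : g.coeff i = 0
      · simp [hgi]
      exact PowerSeries.X_pow_dvd_expand_of_le hq (hslope i (by simp [S, hi, hgi]))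
    · rw [show g.natDegree - i = 0 by omega, mul_zero, pow_zero]
      exact one_dvd _
  obtain ⟨g₁, hg₁, hscale⟩ := (hg.map _).exists_scaleRoots_eq hdvd
  refine ⟨m - i₀, hq, o i₀, g₁, hg₁, hscale, i₀, hi₀m, ?_⟩
  have hcoeff := congr(PowerSeries.coeff ((m - i₀) * o i₀) (Polynomial.coeff $hscale i₀))
  have hdeg₁ : g₁.natDegree = m := by
    simpa [hg.natDegree_map] using congr(natDegree $hscale)
  rw [coeff_scaleRoots, hdeg₁, ← pow_mul, mul_comm (o i₀), PowerSeries.coeff_mul_X_pow',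
    if_pos le_rfl, Nat.sub_self, PowerSeries.coeff_zero_eq_constantCoeff_apply, coeff_map]
    at hcoeff
  rw [hcoeff]
  exact (PowerSeries.coeff_expand_mul _ hq _ _).trans_ne (PowerSeries.coeff_order hi₀)

variable [IsAlgClosed k] [CharZero k]

theorem Monic.exists_isUnit_coeff_comp_X_add_C {g : k⟦X⟧[X]} (hg : g.Monic)
    (hpos : 0 < g.natDegree) (hsub : g.coeff (g.natDegree - 1) = 0)
    (hunit : ∃ i < g.natDegree, PowerSeries.constantCoeff (g.coeff i) ≠ 0) :
    ∃ c : k, ¬IsUnit ((g.comp (X + C (PowerSeries.C c))).coeff 0) ∧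
      ∃ i < g.natDegree, IsUnit ((g.comp (X + C (PowerSeries.C c))).coeff i) := by
  set gbar := g.map PowerSeries.constantCoeff
  have hgbar : gbar.Monic := hg.map _
  have hdeg : gbar.natDegree = g.natDegree := hg.natDegree_map _
  obtain ⟨c, hc⟩ := IsAlgClosed.exists_root gbar (by
    rw [degree_eq_natDegree hgbar.ne_zero, hdeg]; exact_mod_cast hpos.ne')
  have hunit_iff : ∀ i, IsUnit ((g.comp (X + C (PowerSeries.C c))).coeff i) ↔
      (gbar.comp (X + C c)).coeff i ≠ 0 := fun i => by
    rw [PowerSeries.isUnit_iff_constantCoeff, isUnit_iff_ne_zero, ← coeff_map]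
    simp [gbar, Polynomial.map_comp]
  have hroot : ¬IsUnit ((g.comp (X + C (PowerSeries.C c))).coeff 0) := by
    rw [hunit_iff, not_not, coeff_zero_eq_eval_zero, eval_comp]
    simpa using hc
  refine ⟨c, hroot, ?_⟩
  by_contra! hall
  have hshift : gbar.comp (X + C c) = X ^ gbar.natDegree := by
    have h := (hgbar.comp_X_add_C c).eq_X_pow_of_coeff_eq_zero
    rw [natDegree_comp, natDegree_X_add_C, mul_one] at h
    exact h fun i hi => not_not.mp ((hunit_iff i).not.mp (hall i (hdeg ▸ hi)))
  obtain ⟨i, hi, hne⟩ := hunit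
  apply hne
  rw [← coeff_map]
  change gbar.coeff i = 0
  have hsub' : gbar.coeff (gbar.natDegree - 1) = 0 := by rw [hdeg, coeff_map, hsub, map_zero]
  rw [hgbar.eq_X_pow_of_comp_X_add_C_eq_X_pow (hdeg ▸ hpos) hsub' hshift, coeff_X_pow,
    if_neg (hdeg ▸ hi).ne]

theorem Monic.hasPuiseuxRoot {f : k⟦X⟧[X]} (hf : f.Monic) (hpos : 0 < f.natDegree) :
    f.HasPuiseuxRoot := by
  induction hm : f.natDegree using Nat.strong_induction_on generalizing f with
  | _ m ih =>
  obtain ⟨b, hb⟩ := hf.exists_coeff_comp_X_add_C_natDegree_sub_one_eq_zero hpos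
    (by simp [PowerSeries.isUnit_iff_constantCoeff, hpos.ne'])
  set g := f.comp (X + C b)
  have hg : g.Monic := hf.comp_X_add_C b
  have hgdeg : g.natDegree = m := by rw [natDegree_comp, natDegree_X_add_C, mul_one, hm]
  rw [hm] at hb hpos
  refine HasPuiseuxRoot.of_dvd_comp (dvd_refl g) ?_
  by_cases h0 : g.coeff 0 = 0
  · exact .of_coeff_zero_eq_zero h0
  obtain ⟨q, hq, p, g₁, hg₁, hscale, hunit⟩ :=
    hg.exists_scaleRoots_eq_map_expand (hgdeg ▸ hpos) h0
  refine HasPuiseuxRoot.of_map_expand (hq := hq) (hscale ▸ HasPuiseuxRoot.scaleRoots ?_ _)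
  have hg₁deg : g₁.natDegree = m := by
    simpa [hg.natDegree_map, hgdeg] using congr(natDegree $hscale)
  have hsub : g₁.coeff (m - 1) = 0 := by
    have := congr(Polynomial.coeff $hscale (m - 1))
    rw [coeff_scaleRoots, coeff_map, hb, map_zero] at this
    simpa [PowerSeries.X_ne_zero] using this
  rw [hgdeg] at hunit
  rw [← hg₁deg] at hpos hsub hunit
  obtain ⟨c, h0', i, hi, hu⟩ := hg₁.exists_isUnit_coeff_comp_X_add_C hpos hsub hunit
  set h := g₁.comp (X + C (PowerSeries.C c))
  have hh : h.Monic := hg₁.comp_X_add_C _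
  have hhdeg : h.natDegree = m := by rw [natDegree_comp, natDegree_X_add_C, mul_one, hg₁deg]
  refine HasPuiseuxRoot.of_dvd_comp (dvd_refl h) ?_
  obtain ⟨P, hP, hPh, hPpos, hPlt⟩ :=
    hh.exists_monic_dvd_of_isUnit_coeff h0' (by omega) hu
  exact (ih _ (by omega) hP hPpos rfl).of_dvd hPh

theorem Monic.exists_map_expand_eq_prod {f : k⟦X⟧[X]} (hf : f.Monic) {m : ℕ}
    (hdeg : f.natDegree = m) :
    ∃ (N : ℕ) (hN : N ≠ 0) (y : Fin m → k⟦X⟧),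
      f.map (PowerSeries.expand N hN).toRingHom = ∏ i, (X - C (y i)) := by
  induction m generalizing f with
  | zero => exact ⟨1, one_ne_zero, Fin.elim0, by simp [hf.natDegree_eq_zero.mp hdeg]⟩
  | succ m ih =>
    obtain ⟨N₁, hN₁, z, hz⟩ := hf.hasPuiseuxRoot (by omega)
    set F := f.map (PowerSeries.expand N₁ hN₁).toRingHom
    have hF : (X - C z) * (F /ₘ (X - C z)) = F := mul_divByMonic_eq_iff_isRoot.mpr hz
    have hmonic : (F /ₘ (X - C z)).Monic :=
      (monic_X_sub_C z).of_mul_monic_left (by rw [hF]; exact hf.map _)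
    have hdeg' : (F /ₘ (X - C z)).natDegree = m := by
      rw [natDegree_divByMonic _ (monic_X_sub_C z), hf.natDegree_map, hdeg, natDegree_X_sub_C,
        Nat.add_sub_cancel]
    obtain ⟨N₂, hN₂, y, hy⟩ := ih hmonic hdeg'
    refine ⟨N₂ * N₁, mul_ne_zero hN₂ hN₁,
      Fin.cons ((PowerSeries.expand N₂ hN₂).toRingHom z) y, ?_⟩
    rw [map_expand_mul f hN₂ hN₁]
    change F.map _ = _
    rw [← hF, Polynomial.map_mul, hy, Fin.prod_univ_succ]
    simp

theorem exists_map_expand_eq_C_mul_prod {F : k⟦X⟧[X]} (hF : IsUnit F.leadingCoeff) {m : ℕ}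
    (hdeg : F.natDegree = m) :
    ∃ (N : ℕ) (hN : N ≠ 0) (y : Fin m → k⟦X⟧),
      F.map (PowerSeries.expand N hN).toRingHom =
        C ((PowerSeries.expand N hN).toRingHom F.leadingCoeff) * ∏ i, (X - C (y i)) := by
  obtain ⟨u, hu⟩ := hF
  have hmonic : (C (↑u⁻¹ : k⟦X⟧) * F).Monic :=
    monic_C_mul_of_mul_leadingCoeff_eq_one (by simp [← hu])
  have hdeg' : (C (↑u⁻¹ : k⟦X⟧) * F).natDegree = m := by
    rw [natDegree_C_mul u⁻¹.ne_zero, hdeg]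
  obtain ⟨N, hN, y, hy⟩ := hmonic.exists_map_expand_eq_prod hdeg'
  refine ⟨N, hN, y, ?_⟩
  rw [← hy, ← hu, ← Polynomial.map_C, ← Polynomial.map_mul, ← mul_assoc, ← C_mul,
    Units.mul_inv, C_1, one_mul]

end Field

end Polynomial

theorem newton_puiseux_factorization_general
    (k : Type*) [Field k] [IsAlgClosed k] [CharZero k]
    (f : Polynomial (Polynomial k)) (m : ℕ) (hdeg : f.natDegree = m)
    (hlead : (f.leadingCoeff).eval 0 ≠ 0) :
    ∃ N : ℕ, 0 < N ∧ ∃ y : Fin m → PowerSeries k,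
      f.map (Polynomial.eval₂RingHom (PowerSeries.C (R := k))
          ((PowerSeries.X : PowerSeries k) ^ N)) =
        Polynomial.C
            (Polynomial.eval₂ (PowerSeries.C (R := k)) ((PowerSeries.X : PowerSeries k) ^ N)
              f.leadingCoeff) *
          ∏ i : Fin m, (Polynomial.X - Polynomial.C (y i)) := by
  set φ := Polynomial.coeToPowerSeries.ringHom (R := k)
  have hcc : PowerSeries.constantCoeff (φ f.leadingCoeff) ≠ 0 := by
    simpa [φ, ← PowerSeries.coeff_zero_eq_constantCoeff_apply,
      Polynomial.coeff_zero_eq_eval_zero] using hlead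
  have hφ : φ f.leadingCoeff ≠ 0 := fun h0 => hcc (by rw [h0, map_zero])
  have hlc : (f.map φ).leadingCoeff = φ f.leadingCoeff :=
    Polynomial.leadingCoeff_map_of_leadingCoeff_ne_zero φ hφ
  obtain ⟨N, hN, y, hy⟩ := Polynomial.exists_map_expand_eq_C_mul_prod
    (hlc ▸ PowerSeries.isUnit_iff_constantCoeff.mpr (isUnit_iff_ne_zero.mpr hcc))
    (by rw [Polynomial.natDegree_map_of_leadingCoeff_ne_zero φ hφ, hdeg])
  have hcomp : (PowerSeries.expand N hN).toRingHom.comp φ =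
      Polynomial.eval₂RingHom PowerSeries.C (PowerSeries.X ^ N) := by
    ext <;> simp [φ, PowerSeries.expand_C]
  refine ⟨N, Nat.pos_of_ne_zero hN, y, ?_⟩
  rw [← hcomp, ← Polynomial.map_map, hy, hlc]
  exact congrArg (fun a => Polynomial.C a * _) (RingHom.congr_fun hcomp f.leadingCoeff)

/-- Newton–Puiseux theorem: if `f ∈ k[x][y]` has degree `m ≥ 1` in `y` and its leading
coefficient `a_m(x)` satisfies `a_m(0) ≠ 0`, then there is a positive integer `N` and power
series `y_1, …, y_m ∈ k[[u]]` such that, substituting `u^N` for `x`,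
`f(u^N, y) = a_m(u^N) · ∏_{i=1}^m (y − y_i(u))` in `(k[[u]])[y]`. -/
theorem newton_puiseux_factorization
    (k : Type*) [Field k] [IsAlgClosed k] [CharZero k]
    (f : Polynomial (Polynomial k)) (m : ℕ) (hm : 1 ≤ m) (hdeg : f.natDegree = m)
    (hlead : (f.leadingCoeff).eval 0 ≠ 0) :
    ∃ N : ℕ, 0 < N ∧ ∃ y : Fin m → PowerSeries k,
      f.map (Polynomial.eval₂RingHom (PowerSeries.C (R := k))
          ((PowerSeries.X : PowerSeries k) ^ N)) =
        Polynomial.C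
            (Polynomial.eval₂ (PowerSeries.C (R := k)) ((PowerSeries.X : PowerSeries k) ^ N)
              f.leadingCoeff) *
          ∏ i : Fin m, (Polynomial.X - Polynomial.C (y i)) :=
  newton_puiseux_factorization_general k f m hdeg hlead
end

section
/- Let k be a field of characteristic 0, let M be a positive integer, and let B = Σ_{j≥0} b_j u^j ∈ k[[u]] be such that the greatest common divisor of M together with all exponents j in the support of B equals 1. Let ω, ω′ ∈ k[[t]] be nonzero power series with ord_t(ω) ≥ 1 and ord_t(ω′) ≥ 1, satisfying ω^M = ω′^M and B(ω) = B(ω′). Then ω = ω′. (Given the gcd normalization, the series ω is uniquely determined by the pair (ω^M, B(ω)); this is the uniqueness assertion in the proof of the parametrization lemma: the greatest common divisor of M and the exponents of the nonzero terms of y_τ(ω) being 1, ω is uniquely determined by x(φ) and y(φ).) -/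
/-!
Since `k⟦t⟧` is integrally closed, `ω ^ M = ω' ^ M` makes `ω` and `ω'` associated, and in
characteristic zero a unit whose `M`-th power is `1` has zero derivative, hence is a constant:
`ω' = c ω` with `c ^ M = 1`. Then `B(ω') = B_c(ω)`, where `B_c = Σ c ^ j b_j u ^ j`, and
substitution of a nonzero series of positive order is injective (look at the coefficient of
`t ^ (ord B · ord ω)`), so `c ^ j = 1` on the support of `B`. The order of `c` divides `M` and
every exponent of the support, so it is `1`.
-/

/-- Substitution of a power series `ω` (with positive order) into a power series
`B = Σ_{j≥0} b_j u^j`, giving `B(ω) = Σ_{j≥0} b_j ω^j`.  When `ord ω ≥ 1`, the coefficient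
of `t^n` in `ω^j` vanishes for `j > n`, so the following coefficient-wise formula agrees
with the usual substitution. -/
noncomputable def PowerSeries.substAt {k : Type*} [Field k] (ω B : PowerSeries k) :
    PowerSeries k :=
  PowerSeries.mk fun n =>
    ∑ j ∈ Finset.range (n + 1), PowerSeries.coeff j B * PowerSeries.coeff n (ω ^ j)

namespace PowerSeries

variable {k : Type*} [Field k]

theorem eq_C_constantCoeff_of_pow_eq_one [CharZero k] {z : k⟦X⟧} {M : ℕ} (hM : M ≠ 0)
    (hz : z ^ M = 1) : z = C (constantCoeff z) := by
  have hz0 : z ≠ 0 := by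
    rintro rfl
    simp [zero_pow hM] at hz
  refine derivative.ext ?_ (by simp)
  rw [derivative_C]
  have h := congrArg (d⁄dX k) hz
  rw [derivative_pow, derivative_one, ← map_natCast (C (R := k))] at h
  exact (mul_eq_zero.1 h).resolve_left
    (mul_ne_zero ((map_ne_zero_iff _ C_injective).2 (Nat.cast_ne_zero.2 hM)) (pow_ne_zero _ hz0))

theorem exists_eq_C_mul_of_pow_eq_pow [CharZero k] {f g : k⟦X⟧} {M : ℕ} (hM : M ≠ 0)
    (hf : f ≠ 0) (h : f ^ M = g ^ M) : ∃ c : k, c ^ M = 1 ∧ g = C c * f := by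
  obtain ⟨u, rfl⟩ : Associated f g :=
    associated_of_dvd_dvd ((IsIntegrallyClosed.pow_dvd_pow_iff hM).1 (h ▸ dvd_rfl))
      ((IsIntegrallyClosed.pow_dvd_pow_iff hM).1 (h ▸ dvd_rfl))
  have hu : (u : k⟦X⟧) ^ M = 1 :=
    mul_left_cancel₀ (pow_ne_zero M hf) (by rw [← mul_pow, ← h, mul_one])
  refine ⟨constantCoeff (u : k⟦X⟧), by rw [← map_pow, hu, map_one], ?_⟩
  rw [mul_comm, ← eq_C_constantCoeff_of_pow_eq_one hM hu]

theorem coeff_substAt (ω B : k⟦X⟧) (n : ℕ) :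
    coeff n (substAt ω B) = ∑ j ∈ Finset.range (n + 1), coeff j B * coeff n (ω ^ j) :=
  coeff_mk _ _

theorem substAt_C_mul (c : k) (ω B : k⟦X⟧) : substAt (C c * ω) B = substAt ω (rescale c B) := by
  ext n
  simp only [coeff_substAt, coeff_rescale, mul_pow, ← map_pow, coeff_C_mul, mul_left_comm,
    mul_assoc]

theorem substAt_sub (ω B B' : k⟦X⟧) : substAt ω (B - B') = substAt ω B - substAt ω B' := by
  ext n
  simp only [coeff_substAt, map_sub, sub_mul, Finset.sum_sub_distrib]

theorem substAt_ne_zero {ω B : k⟦X⟧} (hω : ω ≠ 0) (h1 : 1 ≤ ω.order) (hB : B ≠ 0) :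
    substAt ω B ≠ 0 := by
  set m := B.order.toNat
  set e := ω.order.toNat
  have he : 0 < e := by
    rw [← coe_toNat_order hω] at h1
    exact_mod_cast h1
  have hpow : ∀ j, (ω ^ j).order = (j * e : ℕ) := by
    intro j
    rw [order_pow, ← coe_toNat_order hω, nsmul_eq_mul, Nat.cast_mul]
  intro h
  have hcoeff := congrArg (coeff (m * e)) h
  rw [coeff_substAt, map_zero, Finset.sum_eq_single_of_mem m
    (Finset.mem_range_succ_iff.2 (Nat.le_mul_of_pos_right m he))] at hcoeff
  · exact mul_ne_zero (coeff_order hB) (order_eq_nat.1 (hpow m)).1 hcoeff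
  · intro j _ hjm
    rcases hjm.lt_or_gt with hlt | hgt
    · rw [coeff_of_lt_order_toNat j hlt, zero_mul]
    · refine mul_eq_zero_of_right _ (coeff_of_lt_order _ ?_)
      rw [hpow]
      exact_mod_cast Nat.mul_lt_mul_of_pos_right hgt he

theorem substAt_injective {ω : k⟦X⟧} (hω : ω ≠ 0) (h1 : 1 ≤ ω.order) :
    Function.Injective (substAt ω) := fun B B' h =>
  sub_eq_zero.1 <| not_not.1 fun hne =>
    substAt_ne_zero hω h1 hne (by rw [substAt_sub, h, sub_self])

theorem pow_eq_one_of_rescale_eq_self {c : k} {B : k⟦X⟧} (h : rescale c B = B) {j : ℕ}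
    (hj : coeff j B ≠ 0) : c ^ j = 1 := by
  have hj' := congrArg (coeff j) h
  rw [coeff_rescale] at hj'
  exact (mul_eq_right₀ hj).1 hj'

end PowerSeries

open PowerSeries in
theorem parametrization_unique_general
    (k : Type*) [Field k] [CharZero k]
    (M : ℕ) (hM : 0 < M) (B : PowerSeries k)
    (hgcd : ∀ d : ℕ, d ∣ M → (∀ j : ℕ, PowerSeries.coeff j B ≠ 0 → d ∣ j) → d = 1)
    (ω ω' : PowerSeries k) (hω : ω ≠ 0)
    (h1 : 1 ≤ ω.order)
    (hpow : ω ^ M = ω' ^ M)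
    (hsub : PowerSeries.substAt ω B = PowerSeries.substAt ω' B) :
    ω = ω' := by
  obtain ⟨c, hcM, rfl⟩ := exists_eq_C_mul_of_pow_eq_pow hM.ne' hω hpow
  have hB : B = rescale c B := substAt_injective hω h1 (hsub.trans (substAt_C_mul c ω B))
  have hc : c = 1 := orderOf_eq_one_iff.1 <| hgcd _ (orderOf_dvd_of_pow_eq_one hcM) fun j hj =>
    orderOf_dvd_of_pow_eq_one (pow_eq_one_of_rescale_eq_self hB.symm hj)
  rw [hc, map_one, one_mul]

/-- If `gcd(M, {j : b_j ≠ 0}) = 1`, then a series `ω` of positive order is uniquely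
determined by the pair `(ω^M, B(ω))`. -/
theorem parametrization_unique
    (k : Type*) [Field k] [CharZero k]
    (M : ℕ) (hM : 0 < M) (B : PowerSeries k)
    (hgcd : ∀ d : ℕ, d ∣ M → (∀ j : ℕ, PowerSeries.coeff j B ≠ 0 → d ∣ j) → d = 1)
    (ω ω' : PowerSeries k) (hω : ω ≠ 0) (hω' : ω' ≠ 0)
    (h1 : 1 ≤ ω.order) (h1' : 1 ≤ ω'.order)
    (hpow : ω ^ M = ω' ^ M)
    (hsub : PowerSeries.substAt ω B = PowerSeries.substAt ω' B) :
    ω = ω' :=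
  parametrization_unique_general k M hM B hgcd ω ω' hω h1 hpow hsub
end
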